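/- arXiv:1204.6444 — 5 statements merged into one kernel-verified Lean document; each statement's English description precedes it below -/
import Mathlib

section
/- Let {E_k} and {F_k} be chains in Ω such that {E_k} divides {F_k} and diam(F_k) → 0 as k → ∞. Then {F_k} also divides {E_k}, so the two chains are equivalent. -/
open Metric Set Filter Topology

/-- The distance between two subsets of a metric space
(infimum of pairwise distances, with `sInf ∅ = 0`). -/
noncomputable def setDist {X : Type*} [MetricSpace X] (A B : Set X) : ℝ :=
  sInf {d : ℝ | ∃ a ∈ A, ∃ b ∈ B, d = dist a b}

/-- `Ω` is a bounded domain: bounded, nonempty, open, connected, and not all of `X`. -/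
def BoundedDomain {X : Type*} [MetricSpace X] (Ω : Set X) : Prop :=
  IsOpen Ω ∧ IsConnected Ω ∧ Bornology.IsBounded Ω ∧ Ω ≠ Set.univ

/-- An acceptable set: a bounded connected set `E ⊊ Ω` whose closure meets `∂Ω`. -/
def Acceptable {X : Type*} [MetricSpace X] (Ω E : Set X) : Prop :=
  Bornology.IsBounded E ∧ IsConnected E ∧ E ⊆ Ω ∧ E ≠ Ω ∧
    (closure E ∩ frontier Ω).Nonempty

/-- A chain in `Ω`: a nested sequence of acceptable sets whose consecutive
relative boundaries are at positive distance and whose impression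
`⋂ k, closure (E k)` lies in `∂Ω`. -/
def IsChainIn {X : Type*} [MetricSpace X] (Ω : Set X) (E : ℕ → Set X) : Prop :=
  (∀ k, Acceptable Ω (E k)) ∧
  (∀ k, E (k + 1) ⊆ E k) ∧
  (∀ k, 0 < setDist (Ω ∩ frontier (E (k + 1))) (Ω ∩ frontier (E k))) ∧
  (⋂ k, closure (E k)) ⊆ frontier Ω

/-- A chain `E` divides a chain `F` if each `F k` contains some `E l`. -/
def Divides {X : Type*} (E F : ℕ → Set X) : Prop := ∀ k, ∃ l, E l ⊆ F k

/-- Two chains are equivalent if each divides the other. -/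
def EquivChains {X : Type*} (E F : ℕ → Set X) : Prop := Divides E F ∧ Divides F E

/-- A prime chain: a chain such that every chain dividing it is equivalent to it. -/
def IsPrimeChain {X : Type*} [MetricSpace X] (Ω : Set X) (E : ℕ → Set X) : Prop :=
  IsChainIn Ω E ∧ ∀ F : ℕ → Set X, IsChainIn Ω F → Divides F E → EquivChains F E

/-- A boundary point `x` is accessible if some curve in `Ω` ends at `x`. -/
def Accessible {X : Type*} [MetricSpace X] (Ω : Set X) (x : X) : Prop :=
  ∃ γ : ℝ → X, ContinuousOn γ (Set.Icc 0 1) ∧ γ 1 = x ∧ γ '' Set.Ico 0 1 ⊆ Ω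

/-- `Ω` is finitely connected at `x₀` if each ball around `x₀` contains an open
neighborhood `G` of `x₀` such that `G ∩ Ω` has finitely many components. -/
def FinitelyConnectedAt {X : Type*} [MetricSpace X] (Ω : Set X) (x₀ : X) : Prop :=
  ∀ r : ℝ, 0 < r → ∃ G : Set X, IsOpen G ∧ x₀ ∈ G ∧ G ⊆ Metric.ball x₀ r ∧
    {C : Set X | ∃ y ∈ G ∩ Ω, C = connectedComponentIn (G ∩ Ω) y}.Finite

/-- A preconnected set meeting both `t` and its complement meets `frontier t`. -/
lemma preconn_inter_frontier_nonempty {X : Type*} [TopologicalSpace X]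
    {s t : Set X} (hs : IsPreconnected s) (h1 : (s ∩ t).Nonempty)
    (h2 : (s \ t).Nonempty) : (s ∩ frontier t).Nonempty := by
  by_contra hemp
  rw [Set.not_nonempty_iff_eq_empty] at hemp
  have hcov : s ⊆ interior t ∪ (closure t)ᶜ := by
    intro z hz
    have hzf : z ∉ frontier t := fun h => by
      have : z ∈ s ∩ frontier t := ⟨hz, h⟩
      simp [hemp] at this
    by_cases hzc : z ∈ closure t
    · left
      by_contra hzi
      exact hzf ⟨hzc, hzi⟩
    · exact Or.inr hzc
  obtain ⟨x, hxs, hxt⟩ := h1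
  obtain ⟨y, hys, hyt⟩ := h2
  have hx' : x ∈ interior t := by
    rcases hcov hxs with h | h
    · exact h
    · exact absurd (subset_closure hxt) h
  have hy' : y ∈ (closure t)ᶜ := by
    rcases hcov hys with h | h
    · exact absurd (interior_subset h) hyt
    · exact h
  obtain ⟨z, _, hz1, hz2⟩ := hs (interior t) (closure t)ᶜ isOpen_interior
    isClosed_closure.isOpen_compl hcov ⟨x, hxs, hx'⟩ ⟨y, hys, hy'⟩
  exact hz2 (interior_subset_closure hz1)

/-- If the chain `E` divides the chain `F` and `diam (F k) → 0`, then `F`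
also divides `E`, so the two chains are equivalent. -/
theorem statement1 {X : Type*} [MetricSpace X] [ProperSpace X]
    (Ω : Set X) (hΩ : BoundedDomain Ω)
    (E F : ℕ → Set X) (hE : IsChainIn Ω E) (hF : IsChainIn Ω F)
    (hdiv : Divides E F)
    (hdiam : Tendsto (fun k => Metric.diam (F k)) atTop (𝓝 0)) :
    Divides F E ∧ EquivChains E F := by
  have hanti : Antitone E := antitone_nat_of_succ_le hE.2.1
  have hdivFE : Divides F E := by
    intro k
    set d := setDist (Ω ∩ frontier (E (k+1))) (Ω ∩ frontier (E k)) with hd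
    have hdpos : 0 < d := hE.2.2.1 k
    have hev : ∀ᶠ l in atTop, Metric.diam (F l) < d :=
      hdiam.eventually (gt_mem_nhds hdpos)
    obtain ⟨l, hl⟩ := hev.exists
    refine ⟨l, ?_⟩
    obtain ⟨m, hm⟩ := hdiv l
    have hm' : E (max m (k+1)) ⊆ F l := (hanti (le_max_left _ _)).trans hm
    have hm'' : E (max m (k+1)) ⊆ E (k+1) := hanti (le_max_right _ _)
    obtain ⟨x, hx⟩ := (hE.1 (max m (k+1))).2.1.1
    by_contra hns
    have hFconn : IsPreconnected (F l) := (hF.1 l).2.1.2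
    have hFΩ : F l ⊆ Ω := (hF.1 l).2.2.1
    have h1 : (F l ∩ E (k+1)).Nonempty := ⟨x, hm' hx, hm'' hx⟩
    have h2 : (F l \ E k).Nonempty := by
      rcases not_subset.mp hns with ⟨y, hy, hy'⟩; exact ⟨y, hy, hy'⟩
    have h2' : (F l \ E (k+1)).Nonempty :=
      h2.imp (fun y hy => ⟨hy.1, fun h => hy.2 (hE.2.1 k h)⟩)
    obtain ⟨a, haF, hafr⟩ := preconn_inter_frontier_nonempty hFconn h1 h2'
    obtain ⟨b, hbF, hbfr⟩ := preconn_inter_frontier_nonempty hFconn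
      ⟨x, hm' hx, hE.2.1 k (hm'' hx)⟩ h2
    have hle : d ≤ dist a b := by
      apply csInf_le
      · exact ⟨0, fun r hr => by
          obtain ⟨p, _, q, _, rfl⟩ := hr; exact dist_nonneg⟩
      · exact ⟨a, ⟨hFΩ haF, hafr⟩, b, ⟨hFΩ hbF, hbfr⟩, rfl⟩
    have hdiamle : dist a b ≤ Metric.diam (F l) :=
      Metric.dist_le_diam_of_mem (hF.1 l).1 haF hbF
    linarith
  exact ⟨hdivFE, hdiv, hdivFE⟩
end

section
/- If {E_k} is a chain in Ω whose impression ⋂_{k=1}^∞ cl(E_k) is a singleton, then {E_k} is a prime chain: every chain that divides {E_k} is equivalent to {E_k}. -/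
open Metric Set Filter Topology

/-- A preconnected set meeting `A` and the complement of `closure A` meets `frontier A`. -/
lemma cross_frontier {X : Type*} [TopologicalSpace X] {S A : Set X}
    (hS : IsPreconnected S) (h1 : (S ∩ A).Nonempty) (h2 : (S \ closure A).Nonempty) :
    (S ∩ frontier A).Nonempty := by
  by_contra h
  rw [Set.not_nonempty_iff_eq_empty] at h
  have hsub : S ⊆ interior A ∪ (closure A)ᶜ := by
    intro s hs
    by_cases hc : s ∈ closure A
    · left
      by_contra hi
      have : s ∈ S ∩ frontier A := ⟨hs, hc, hi⟩
      simp [h] at this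
    · right; exact hc
  obtain ⟨a, haS, haA⟩ := h1
  have haI : a ∈ interior A := by
    rcases hsub haS with hi | hc
    · exact hi
    · exact absurd (subset_closure haA) hc
  obtain ⟨b, hbS, hbc⟩ := h2
  obtain ⟨z, -, hz1, hz2⟩ := hS (interior A) (closure A)ᶜ isOpen_interior
    isClosed_closure.isOpen_compl hsub ⟨a, haS, haI⟩ ⟨b, hbS, hbc⟩
  exact hz2 (interior_subset_closure hz1)

/-- If a preconnected set meets `A` and avoids `frontier A`, it is contained in `A`. -/
lemma subset_of_avoids_frontier {X : Type*} [TopologicalSpace X] {S A : Set X}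
    (hS : IsPreconnected S) (h1 : (S ∩ A).Nonempty) (h : S ∩ frontier A = ∅) : S ⊆ A := by
  have hcl : S ⊆ closure A := by
    intro s hs
    by_contra hc
    obtain ⟨z, hz1, hz2⟩ := cross_frontier hS h1 ⟨s, hs, hc⟩
    have : z ∈ S ∩ frontier A := ⟨hz1, hz2⟩
    simp [h] at this
  intro s hs
  have hnf : s ∉ frontier A := fun hf => by
    have : s ∈ S ∩ frontier A := ⟨hs, hf⟩
    simp [h] at this
  have : s ∈ interior A := by
    rcases not_and_or.mp (fun hx : s ∈ closure A ∧ s ∉ interior A => hnf ⟨hx.1, hx.2⟩) with h' | h'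
    · exact absurd (hcl hs) h'
    · exact not_not.mp h'
  exact interior_subset this

lemma setDist_le' {X : Type*} [MetricSpace X] {A B : Set X} {a b : X}
    (ha : a ∈ A) (hb : b ∈ B) : setDist A B ≤ dist a b := by
  apply csInf_le
  · exact ⟨0, fun r ⟨a', _, b', _, hr⟩ => hr ▸ dist_nonneg⟩
  · exact ⟨a, ha, b, hb, rfl⟩

/-- A chain whose impression is a singleton is a prime chain. -/
theorem statement2 {X : Type*} [MetricSpace X] [ProperSpace X]
    (Ω : Set X) (hΩ : BoundedDomain Ω)
    (E : ℕ → Set X) (hE : IsChainIn Ω E)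
    (x : X) (himp : (⋂ k, closure (E k)) = {x}) :
    IsPrimeChain Ω E := by
  obtain ⟨hacc, hnest, hdist, himpE⟩ := hE
  refine ⟨⟨hacc, hnest, hdist, himpE⟩, ?_⟩
  intro F hF hFE
  refine ⟨hFE, ?_⟩
  intro k
  obtain ⟨haccF, hnestF, hdistF, -⟩ := hF
  have hantF : Antitone F := antitone_nat_of_succ_le hnestF
  set d := setDist (Ω ∩ frontier (F (k+2))) (Ω ∩ frontier (F (k+1))) with hd
  have hdpos : 0 < d := hdistF (k+1)
  -- find l with closure (E l) ⊆ ball x (d/2)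
  have hV : Directed (· ⊇ ·) (fun l => closure (E l)) := by
    intro i j
    refine ⟨max i j, ?_, ?_⟩ <;> exact closure_mono
      ((antitone_nat_of_succ_le hnest) (by simp))
  obtain ⟨l, hl⟩ := exists_subset_nhds_of_isCompact' (U := Metric.ball x (d/2)) hV
    (fun l => (hacc l).1.isCompact_closure) (fun l => isClosed_closure)
    (by
      intro y hy
      rw [himp] at hy
      rw [Set.mem_singleton_iff] at hy
      subst hy
      exact Metric.ball_mem_nhds _ (by linarith))
  refine ⟨l, ?_⟩
  -- a point of F (k+2) inside E l
  obtain ⟨m₀, hm₀⟩ := hFE l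
  have hFm : F (max m₀ (k+2)) ⊆ E l := fun z hz => hm₀ (hantF (le_max_left _ _) hz)
  have hFm2 : F (max m₀ (k+2)) ⊆ F (k+2) := hantF (le_max_right _ _)
  obtain ⟨a, ha⟩ := (haccF (max m₀ (k+2))).2.1.nonempty
  have haE : a ∈ E l := hFm ha
  have haF2 : a ∈ F (k+2) := hFm2 ha
  have hpre : IsPreconnected (E l) := (hacc l).2.1.isPreconnected
  have hEΩ : E l ⊆ Ω := (hacc l).2.2.1
  by_cases hy : (E l ∩ frontier (F k)).Nonempty
  · exfalso
    obtain ⟨y, hyE, hyf⟩ := hy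
    have hyΩ : y ∈ Ω := hEΩ hyE
    have hynI : y ∉ interior (F k) := hyf.2
    -- y ∉ closure (F (k+1))
    have hyc : y ∉ closure (F (k+1)) := by
      intro hyc
      have hyf1 : y ∈ frontier (F (k+1)) :=
        ⟨hyc, fun hi => hynI (interior_mono (hnestF k) hi)⟩
      have h0 := setDist_le' (A := Ω ∩ frontier (F (k+1))) (B := Ω ∩ frontier (F k))
        ⟨hyΩ, hyf1⟩ ⟨hyΩ, hyf⟩
      rw [dist_self] at h0
      exact absurd h0 (not_le.mpr (hdistF k))
    obtain ⟨w, hwE, hwf⟩ := cross_frontier hpre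
      ⟨a, haE, hnestF (k+1) haF2⟩ ⟨y, hyE, hyc⟩
    have hwΩ : w ∈ Ω := hEΩ hwE
    have hwc : w ∉ closure (F (k+2)) := by
      intro hwc
      have hwf2 : w ∈ frontier (F (k+2)) :=
        ⟨hwc, fun hi => hwf.2 (interior_mono (hnestF (k+1)) hi)⟩
      have h0 := setDist_le' (A := Ω ∩ frontier (F (k+2))) (B := Ω ∩ frontier (F (k+1)))
        ⟨hwΩ, hwf2⟩ ⟨hwΩ, hwf⟩
      rw [dist_self] at h0
      exact absurd h0 (not_le.mpr hdpos)
    obtain ⟨v, hvE, hvf⟩ := cross_frontier hpre ⟨a, haE, haF2⟩ ⟨w, hwE, hwc⟩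
    have hvΩ : v ∈ Ω := hEΩ hvE
    have hle : d ≤ dist v w := setDist_le' ⟨hvΩ, hvf⟩ ⟨hwΩ, hwf⟩
    have hvb : v ∈ Metric.ball x (d/2) := hl (subset_closure hvE)
    have hwb : w ∈ Metric.ball x (d/2) := hl (subset_closure hwE)
    rw [Metric.mem_ball] at hvb hwb
    have := dist_triangle v x w
    rw [dist_comm x w] at this
    linarith [dist_comm v x ▸ hvb]
  · exact subset_of_avoids_frontier hpre ⟨a, haE, hantF (by norm_num) haF2⟩
      (Set.not_nonempty_iff_eq_empty.mp hy)
end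

section
/- Let {E_k} be a chain in Ω. For each k, one has E_{k+1} ⊆ int(E_k); let G_k be the connected component of int(E_k) containing E_{k+1}. Then each G_k is open, the sequence {G_k} is a chain, and {G_k} is equivalent to {E_k}. -/
open Metric Set Filter Topology

/-- For a chain `E` one has `E (k+1) ⊆ int (E k)`; the connected components
`G k` of `int (E k)` containing `E (k+1)` are open and form a chain
equivalent to `E`. -/
theorem statement3 {X : Type*} [MetricSpace X] [ProperSpace X] [LocallyConnectedSpace X]
    (Ω : Set X) (hΩ : BoundedDomain Ω)
    (E : ℕ → Set X) (hE : IsChainIn Ω E) :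
    (∀ k, E (k + 1) ⊆ interior (E k)) ∧
    ∀ G : ℕ → Set X,
      (∀ k, ∀ x ∈ E (k + 1), G k = connectedComponentIn (interior (E k)) x) →
      (∀ k, IsOpen (G k)) ∧ IsChainIn Ω G ∧ EquivChains G E := by
  obtain ⟨hacc, hnest, hdist, himp⟩ := hE
  have hne : ∀ k, (E k).Nonempty := fun k => (hacc k).2.1.1
  -- Part 1: E (k+1) ⊆ interior (E k)
  have h1 : ∀ k, E (k + 1) ⊆ interior (E k) := by
    intro k x hx
    by_contra hxi
    have hxEk : x ∈ E k := hnest k hx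
    have hxΩ : x ∈ Ω := (hacc (k+1)).2.2.1 hx
    have hfk : x ∈ frontier (E k) := ⟨subset_closure hxEk, hxi⟩
    have hfk1 : x ∈ frontier (E (k+1)) :=
      ⟨subset_closure hx, fun h => hxi (interior_mono (hnest k) h)⟩
    have h0 : (0:ℝ) ∈ {d : ℝ | ∃ a ∈ Ω ∩ frontier (E (k+1)), ∃ b ∈ Ω ∩ frontier (E k), d = dist a b} :=
      ⟨x, ⟨hxΩ, hfk1⟩, x, ⟨hxΩ, hfk⟩, (dist_self x).symm⟩
    have hb : BddBelow {d : ℝ | ∃ a ∈ Ω ∩ frontier (E (k+1)), ∃ b ∈ Ω ∩ frontier (E k), d = dist a b} :=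
      ⟨0, by rintro d ⟨a, _, b, _, rfl⟩; exact dist_nonneg⟩
    have hle := csInf_le hb h0
    have hp := hdist k
    unfold setDist at hp
    linarith
  refine ⟨h1, fun G hG => ?_⟩
  have hGint : ∀ k, G k ⊆ interior (E k) := by
    intro k
    obtain ⟨x, hx⟩ := hne (k+1)
    rw [hG k x hx]
    exact connectedComponentIn_subset _ _
  have hGE : ∀ k, G k ⊆ E k := fun k => (hGint k).trans interior_subset
  have hEG : ∀ k, E (k+1) ⊆ G k := by
    intro k y hy
    rw [hG k y hy]
    exact mem_connectedComponentIn (h1 k hy)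
  have hGopen : ∀ k, IsOpen (G k) := by
    intro k
    obtain ⟨x, hx⟩ := hne (k+1)
    rw [hG k x hx]
    exact isOpen_interior.connectedComponentIn
  have hGconn : ∀ k, IsConnected (G k) := by
    intro k
    obtain ⟨x, hx⟩ := hne (k+1)
    rw [hG k x hx]
    exact isConnected_connectedComponentIn_iff.2 (h1 k hx)
  have hGΩ : ∀ k, G k ⊆ Ω := fun k => (hGE k).trans (hacc k).2.2.1
  have hGneΩ : ∀ k, G k ≠ Ω := by
    intro k h
    exact (hacc k).2.2.2.1 (subset_antisymm (hacc k).2.2.1 (h ▸ hGE k))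
  -- Ω ∩ frontier (G k) ⊆ Ω ∩ frontier (E k)
  have hfront : ∀ k, Ω ∩ frontier (G k) ⊆ Ω ∩ frontier (E k) := by
    intro k y hy
    obtain ⟨hyΩ, hyf⟩ := hy
    have hycl : y ∈ closure (E k) := closure_mono (hGE k) hyf.1
    have hynG : y ∉ G k := fun h => hyf.2 (by rw [(hGopen k).interior_eq]; exact h)
    refine ⟨hyΩ, hycl, ?_⟩
    intro hyint
    obtain ⟨x, hx⟩ := hne (k+1)
    have hCopen : IsOpen (connectedComponentIn (interior (E k)) y) :=
      isOpen_interior.connectedComponentIn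
    have hyC : y ∈ connectedComponentIn (interior (E k)) y := mem_connectedComponentIn hyint
    obtain ⟨z, hzC, hzG⟩ := (_root_.mem_closure_iff.1 hyf.1) _ hCopen hyC
    have e1 : connectedComponentIn (interior (E k)) y = connectedComponentIn (interior (E k)) z :=
      connectedComponentIn_eq hzC
    have e2 : G k = connectedComponentIn (interior (E k)) z := by
      rw [hG k x hx]
      exact connectedComponentIn_eq (by rw [← hG k x hx]; exact hzG)
    exact hynG (by rw [e2, ← e1]; exact hyC)
  -- nonemptiness of Ω ∩ frontier (G k)
  have hfne : ∀ k, (Ω ∩ frontier (G k)).Nonempty := by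
    intro k
    by_contra h
    obtain ⟨x, hx⟩ := hne (k+1)
    have hxG : x ∈ G k := hEG k hx
    obtain ⟨y, hyΩ, hynG⟩ : ∃ y ∈ Ω, y ∉ G k := by
      by_contra h'
      push_neg at h'
      exact hGneΩ k (subset_antisymm (hGΩ k) h')
    have hcov : Ω ⊆ G k ∪ (closure (G k))ᶜ := by
      intro z hz
      by_cases hzc : z ∈ closure (G k)
      · left
        by_contra hzG
        exact h ⟨z, hz, hzc, fun hi => hzG (by rw [← (hGopen k).interior_eq]; exact hi)⟩
      · right; exact hzc
    have hync : y ∉ closure (G k) := by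
      intro hyc
      exact h ⟨y, hyΩ, hyc, fun hi => hynG (by rw [← (hGopen k).interior_eq]; exact hi)⟩
    obtain ⟨w, _, hw1, hw2⟩ := hΩ.2.1.2 (G k) (closure (G k))ᶜ (hGopen k)
      isClosed_closure.isOpen_compl hcov ⟨x, hGΩ k hxG, hxG⟩ ⟨y, hyΩ, hync⟩
    exact hw2 (subset_closure hw1)
  -- distance positivity for G
  have hdistG : ∀ k, 0 < setDist (Ω ∩ frontier (G (k+1))) (Ω ∩ frontier (G k)) := by
    intro k
    have hp := hdist k
    unfold setDist at hp ⊢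
    have hsub : {d : ℝ | ∃ a ∈ Ω ∩ frontier (G (k+1)), ∃ b ∈ Ω ∩ frontier (G k), d = dist a b} ⊆
        {d : ℝ | ∃ a ∈ Ω ∩ frontier (E (k+1)), ∃ b ∈ Ω ∩ frontier (E k), d = dist a b} := by
      rintro d ⟨a, ha, b, hb, rfl⟩
      exact ⟨a, hfront (k+1) ha, b, hfront k hb, rfl⟩
    have hneS : {d : ℝ | ∃ a ∈ Ω ∩ frontier (G (k+1)), ∃ b ∈ Ω ∩ frontier (G k), d = dist a b}.Nonempty := by
      obtain ⟨a, ha⟩ := hfne (k+1)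
      obtain ⟨b, hb⟩ := hfne k
      exact ⟨dist a b, a, ha, b, hb, rfl⟩
    have hbdd : BddBelow {d : ℝ | ∃ a ∈ Ω ∩ frontier (E (k+1)), ∃ b ∈ Ω ∩ frontier (E k), d = dist a b} :=
      ⟨0, by rintro d ⟨a, _, b, _, rfl⟩; exact dist_nonneg⟩
    have := csInf_le_csInf hbdd hneS hsub
    linarith
  refine ⟨hGopen, ⟨?_, fun k => (hGE (k+1)).trans (hEG k), hdistG, ?_⟩, fun k => ⟨k, hGE k⟩, fun k => ⟨k+1, hEG k⟩⟩
  · intro k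
    obtain ⟨p, hp1, hp2⟩ := (hacc (k+1)).2.2.2.2
    exact ⟨(hacc k).1.subset (hGE k), hGconn k, hGΩ k, hGneΩ k,
      ⟨p, closure_mono (hEG k) hp1, hp2⟩⟩
  · exact (Set.iInter_mono fun k => closure_mono (hGE k)).trans himp
end

section
/- For a point x ∈ ∂Ω the following are equivalent: (1) x is accessible; (2) there exists a chain in Ω with impression {x}; (3) there exists a prime chain in Ω with impression {x}. -/
open Metric Set Filter Topology

/-!
Accessible ⇒ prime chain: if a curve `γ` in `Ω` ends at `x`, let `E k` be the component of
`Ω ∩ B(x, r k)` containing a tail of `γ`, where `r k ↓ 0`. The relative boundary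
`Ω ∩ ∂(E k)` lies on the sphere `S(x, r k)`, so consecutive ones are at distance
`≥ r k - r (k + 1)`. The chain is prime because its links shrink to `x`: if a chain `F` divides
it but `E m ⊄ F k`, the connected set `E m` meets `F (k + 1)` and the complement of `F k`, hence
contains points of `∂F (k + 1)` and of `∂F k` closer than `2 r m`, which is impossible once
`2 r m` is below their distance.

Chain with impression `{x}` ⇒ accessible: by properness the closures `cl E k` eventually lie in
any ball around `x`. Points of successive links are joined by paths inside the components of
`Ω ∩ B(x, 2⁻ᵏ)`, and the concatenation of these paths is a curve ending at `x`. The paths exist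
because open connected subsets of a complete, locally connected metric space are path connected
(Mazurkiewicz–Moore–Menger): a chain of small open connected links from `a` to `b` can be refined
indefinitely, each link being replaced by a finer chain inside it, and the nested links occupied
at time `t` shrink to a single point `γ t`, which depends continuously on `t`.
-/

theorem IsPreconnected.inter_frontier_nonempty {X : Type*} [TopologicalSpace X] {s t : Set X}
    (hs : IsPreconnected s) (hst : (s ∩ t).Nonempty) (hst' : (s \ t).Nonempty) :
    (s ∩ frontier t).Nonempty := by
  by_contra h
  have hcover : s ⊆ interior t ∪ (closure t)ᶜ := fun y hy => by
    by_cases hy' : y ∈ closure t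
    · exact .inl (not_not.1 fun hyi => h ⟨y, hy, hy', hyi⟩)
    · exact .inr hy'
  rcases hs.subset_or_subset isOpen_interior isClosed_closure.isOpen_compl
    (disjoint_compl_right.mono_left interior_subset_closure) hcover with hsub | hsub
  · obtain ⟨y, hys, hyt⟩ := hst'
    exact hyt (interior_subset (hsub hys))
  · obtain ⟨y, hys, hyt⟩ := hst
    exact hsub hys (subset_closure hyt)

theorem disjoint_frontier_connectedComponentIn {X : Type*} [TopologicalSpace X]
    [LocallyConnectedSpace X] {F : Set X} (hF : IsOpen F) (y : X) :
    Disjoint (frontier (connectedComponentIn F y)) F := by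
  refine Set.disjoint_left.2 fun z hz hzF => ?_
  obtain ⟨w, hwz, hwy⟩ := mem_closure_iff.1 hz.1 _ hF.connectedComponentIn
    (mem_connectedComponentIn hzF)
  have hyz : connectedComponentIn F y = connectedComponentIn F z :=
    (connectedComponentIn_eq hwy).trans (connectedComponentIn_eq hwz).symm
  have hzy : z ∈ connectedComponentIn F y := hyz ▸ mem_connectedComponentIn hzF
  exact hF.connectedComponentIn.inter_frontier_eq.subset ⟨hzy, hz⟩

section EpsChain

variable {X : Type*} [MetricSpace X] {U W V : Set X} {ε : ℝ} {a b c : X}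

structure IsLink (U : Set X) (ε : ℝ) (V : Set X) : Prop where
  isOpen : IsOpen V
  isPreconnected : IsPreconnected V
  closure_subset : closure V ⊆ U
  isBounded : Bornology.IsBounded V
  diam_le : diam V ≤ ε

theorem IsLink.mono (h : IsLink U ε V) (hUW : U ⊆ W) : IsLink W ε V :=
  ⟨h.isOpen, h.isPreconnected, h.closure_subset.trans hUW, h.isBounded, h.diam_le⟩

theorem IsLink.dist_le (h : IsLink U ε V) {y z : X} (hy : y ∈ closure V) (hz : z ∈ closure V) :
    dist y z ≤ ε :=
  (dist_le_diam_of_mem h.isBounded.closure hy hz).trans ((diam_closure V).trans_le h.diam_le)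

theorem exists_isLink [LocallyConnectedSpace X] (hU : IsOpen U) {y : X} (hy : y ∈ U)
    (hε : 0 < ε) : ∃ V, y ∈ V ∧ IsLink U ε V := by
  obtain ⟨r, hr, hrU⟩ := nhds_basis_closedBall.mem_iff.1 (hU.mem_nhds hy)
  obtain ⟨V, ⟨hVo, hyV, hVc⟩, hVr⟩ := (LocallyConnectedSpace.open_connected_basis y).mem_iff.1
    (ball_mem_nhds y (lt_min hr (half_pos hε)))
  refine ⟨V, hyV, hVo, hVc.isPreconnected, ?_, isBounded_ball.subset hVr, ?_⟩
  · calc closure V ⊆ closedBall y (min r (ε / 2)) :=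
          (closure_mono hVr).trans closure_ball_subset_closedBall
      _ ⊆ closedBall y r := closedBall_subset_closedBall (min_le_left _ _)
      _ ⊆ U := hrU
  · calc diam V ≤ diam (ball y (min r (ε / 2))) := diam_mono hVr isBounded_ball
      _ ≤ 2 * min r (ε / 2) := diam_ball (lt_min hr (half_pos hε)).le
      _ ≤ ε := by linarith [min_le_right r (ε / 2)]

structure IsEpsChain (U : Set X) (ε : ℝ) (a b : X) (N : ℕ) (C : ℕ → Set X) : Prop where
  len_pos : 0 < N
  left_mem : a ∈ C 0
  right_mem : b ∈ C (N - 1)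
  inter_succ : ∀ i, i + 1 < N → (C i ∩ C (i + 1)).Nonempty
  isLink : ∀ i < N, IsLink U ε (C i)

namespace IsEpsChain

variable {N M : ℕ} {C : ℕ → Set X}

theorem nonempty (h : IsEpsChain U ε a b N C) {i : ℕ} (hi : i < N) : (C i).Nonempty := by
  by_cases hi' : i + 1 < N
  · exact (h.inter_succ i hi').mono inter_subset_left
  · exact ⟨b, (show i = N - 1 by omega) ▸ h.right_mem⟩

theorem inter_nonempty (h : IsEpsChain U ε a b N C) {i j : ℕ} (hi : i < N) (hj : j < N)
    (hij : i ≤ j + 1) (hji : j ≤ i + 1) : (C i ∩ C j).Nonempty := by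
  rcases (show i = j ∨ j = i + 1 ∨ i = j + 1 by omega) with rfl | rfl | rfl
  · simpa using h.nonempty hi
  · exact h.inter_succ i hj
  · exact inter_comm (C j) _ ▸ h.inter_succ j hi

theorem single (hV : IsLink U ε V) (ha : a ∈ V) (hb : b ∈ V) :
    IsEpsChain U ε a b 1 fun _ => V :=
  ⟨one_pos, ha, hb, fun i hi => by omega, fun _ _ => hV⟩

theorem snoc (h : IsEpsChain U ε a b N C) (hV : IsLink U ε V) (hb : b ∈ V) (hc : c ∈ V) :
    IsEpsChain U ε a c (N + 1) (Function.update C N V) where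
  len_pos := N.succ_pos
  left_mem := by rw [Function.update_of_ne h.len_pos.ne]; exact h.left_mem
  right_mem := by simpa using hc
  inter_succ i hi := by
    rcases (show i + 1 < N ∨ i + 1 = N by omega) with hi' | hi'
    · rw [Function.update_of_ne (by omega), Function.update_of_ne (by omega)]
      exact h.inter_succ i hi'
    · rw [Function.update_of_ne (by omega), hi', Function.update_self]
      exact ⟨b, (show i = N - 1 by omega) ▸ h.right_mem, hb⟩
  isLink i hi := by
    rcases (show i < N ∨ i = N by omega) with hi' | rfl
    · rw [Function.update_of_ne hi'.ne]; exact h.isLink i hi'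
    · rw [Function.update_self]; exact hV

theorem pad (h : IsEpsChain U ε a b N C) {m : ℕ} (hm : N ≤ m) :
    IsEpsChain U ε a b m fun i => C (min i (N - 1)) where
  len_pos := h.len_pos.trans_le hm
  left_mem := by simpa using h.left_mem
  right_mem := by rw [show min (m - 1) (N - 1) = N - 1 by omega]; exact h.right_mem
  inter_succ i hi := by
    by_cases hi' : i + 1 < N
    · rw [min_eq_left (by omega), min_eq_left (by omega)]; exact h.inter_succ i hi'
    · rw [min_eq_right (by omega), min_eq_right (by omega), inter_self]
      exact ⟨b, h.right_mem⟩
  isLink i _ := h.isLink _ (by have := h.len_pos; omega)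

theorem mono (h : IsEpsChain U ε a b N C) (hUW : U ⊆ W) : IsEpsChain W ε a b N C :=
  ⟨h.len_pos, h.left_mem, h.right_mem, h.inter_succ, fun i hi => (h.isLink i hi).mono hUW⟩

theorem concat {p : ℕ → X} {D : ℕ → ℕ → Set X} (hN : 0 < N)
    (h : ∀ i < N, IsEpsChain U ε (p i) (p (i + 1)) M (D i)) :
    IsEpsChain U ε (p 0) (p N) (N * M) fun k => D (k / M) (k % M) := by
  have hM := (h 0 hN).len_pos
  have hdivmod {k : ℕ} (q r : ℕ) (hr : r < M) (hk : r + M * q = k) : k / M = q ∧ k % M = r :=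
    (Nat.div_mod_unique hM).2 ⟨hk, hr⟩
  refine ⟨Nat.mul_pos hN hM, ?_, ?_, fun k hk => ?_, fun k hk => ?_⟩
  · simpa using (h 0 hN).left_mem
  · obtain ⟨hq, hr⟩ := hdivmod (k := N * M - 1) (N - 1) (M - 1) (by omega) (by
      obtain ⟨n, rfl⟩ := Nat.exists_eq_add_one_of_ne_zero hN.ne'
      obtain ⟨m, rfl⟩ := Nat.exists_eq_add_one_of_ne_zero hM.ne'
      simp only [Nat.add_sub_cancel]; ring_nf; omega)
    simpa [hq, hr, Nat.sub_add_cancel hN] using (h (N - 1) (by omega)).right_mem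
  · have hq : k / M < N := (Nat.div_lt_iff_lt_mul hM).2 (by omega)
    have hk' := Nat.mod_add_div k M
    by_cases hr : k % M + 1 < M
    · obtain ⟨hq', hr'⟩ := hdivmod (k := k + 1) (k / M) _ hr (by omega)
      simpa only [hq', hr'] using (h _ hq).inter_succ _ hr
    · -- `k` is the last link of block `k / M`, which meets the next block at `p (k / M + 1)`
      have hlast : k % M = M - 1 := by have := Nat.mod_lt k hM; omega
      have hk1 : 0 + M * (k / M + 1) = k + 1 := by rw [Nat.mul_succ]; omega
      obtain ⟨hq', hr'⟩ := hdivmod (k / M + 1) 0 hM hk1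
      have hq1 : k / M + 1 < N :=
        Nat.lt_of_mul_lt_mul_left (a := M) (by rw [mul_comm M N]; omega)
      simp only [hq', hr']
      refine ⟨p (k / M + 1), ?_, (h _ hq1).left_mem⟩
      simpa [hlast] using (h _ hq).right_mem
  · exact (h _ ((Nat.div_lt_iff_lt_mul hM).2 hk)).isLink _ (Nat.mod_lt k hM)

theorem exists_junctions (h : IsEpsChain U ε a b N C) :
    ∃ p : ℕ → X, p 0 = a ∧ p N = b ∧ ∀ i < N, p i ∈ C i ∧ p (i + 1) ∈ C i := by
  have : ∀ i, ∃ y : X, i + 1 < N → y ∈ C i ∩ C (i + 1) := fun i => by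
    by_cases hi : i + 1 < N
    · exact (h.inter_succ i hi).imp fun _ hy _ => hy
    · exact ⟨a, fun hi' => absurd hi' hi⟩
  choose q hq using this
  refine ⟨fun i => if i = 0 then a else if i < N then q (i - 1) else b, by simp,
    by simp [h.len_pos.ne'], fun i hi => ⟨?_, ?_⟩⟩
  · rcases i with _ | i
    · simpa using h.left_mem
    · simpa [hi] using (hq i hi).2
  · by_cases hi' : i + 1 < N
    · simpa [hi'] using (hq i hi').1
    · obtain rfl : i = N - 1 := by omega
      simpa [Nat.sub_add_cancel h.len_pos, h.len_pos.ne'] using h.right_mem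

end IsEpsChain

structure IsRefiningSeq (U : Set X) (ε : ℕ → ℝ) (a b : X) (N M : ℕ → ℕ) (C : ℕ → ℕ → Set X) :
    Prop where
  isEpsChain : ∀ n, IsEpsChain U (ε n) a b (N n) (C n)
  len_succ : ∀ n, N (n + 1) = N n * M n
  closure_subset : ∀ n, ∀ k < N (n + 1), closure (C (n + 1) k) ⊆ C n (k / M n)

end EpsChain

/-- The link of an `N`-link chain occupied at time `t ∈ [0, 1]` by a path running through it in
unit time. -/
noncomputable def chainIndex (N : ℕ) (t : ℝ) : ℕ := min ⌊t * N⌋₊ (N - 1)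

theorem chainIndex_lt {N : ℕ} (hN : 0 < N) (t : ℝ) : chainIndex N t < N := by
  unfold chainIndex; omega

theorem chainIndex_zero (N : ℕ) : chainIndex N 0 = 0 := by simp [chainIndex]

theorem chainIndex_one (N : ℕ) : chainIndex N 1 = N - 1 := by simp [chainIndex]

theorem chainIndex_mul_div {N M : ℕ} (hN : 0 < N) (hM : 0 < M) (t : ℝ) :
    chainIndex (N * M) t / M = chainIndex N t := by
  have hfloor : ⌊t * ↑(N * M)⌋₊ / M = ⌊t * N⌋₊ := by
    rw [← Nat.floor_div_natCast, Nat.cast_mul, ← mul_assoc, mul_div_cancel_right₀ _ (by positivity)]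
  have hlast : (N * M - 1) / M = N - 1 := Nat.div_eq_of_lt_le
    (by rw [Nat.sub_mul, one_mul]; omega)
    (by rw [Nat.sub_add_cancel hN]; have := Nat.mul_pos hN hM; omega)
  rw [chainIndex, Monotone.map_min fun _ _ h => Nat.div_le_div_right h, hfloor, hlast, chainIndex]

theorem chainIndex_le_succ {N : ℕ} (hN : 0 < N) {s t : ℝ} (hst : dist s t < 1 / N) :
    chainIndex N s ≤ chainIndex N t + 1 := by
  have hsN : s * N < t * N + 1 := by
    have := (abs_lt.1 (Real.dist_eq s t ▸ hst)).2
    rw [lt_div_iff₀ (by positivity)] at this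
    linarith
  have : ⌊s * N⌋₊ < ⌊t * N⌋₊ + 2 := (Nat.floor_lt' (by omega)).2 (by
    push_cast; linarith [Nat.lt_floor_add_one (t * N)])
  unfold chainIndex; omega

section Refinement

variable {X : Type*} [MetricSpace X] [LocallyConnectedSpace X] {U : Set X} {ε ε' : ℝ} {a b : X}

theorem exists_isEpsChain (hU : IsOpen U) (hUc : IsPreconnected U) (ha : a ∈ U) (hb : b ∈ U)
    (hε : 0 < ε) : ∃ N C, IsEpsChain U ε a b N C := by
  set S := {y | ∃ N C, IsEpsChain U ε a y N C}
  have hlink : ∀ y ∈ U, ∃ V, y ∈ V ∧ IsOpen V ∧ ((V ∩ S).Nonempty → V ⊆ S) := fun y hy => by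
    obtain ⟨V, hyV, hV⟩ := exists_isLink hU hy hε
    exact ⟨V, hyV, hV.isOpen, fun ⟨z, hzV, N, C, hC⟩ w hw => ⟨N + 1, _, hC.snoc hV hzV hw⟩⟩
  have hSU : S ⊆ U := fun y ⟨N, C, hC⟩ =>
    (hC.isLink (N - 1) (Nat.sub_lt hC.len_pos one_pos)).closure_subset
      (subset_closure hC.right_mem)
  have hSo : IsOpen S := isOpen_iff_mem_nhds.2 fun y hy => by
    obtain ⟨V, hyV, hVo, hVS⟩ := hlink y (hSU hy)
    exact mem_of_superset (hVo.mem_nhds hyV) (hVS ⟨y, hyV, hy⟩)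
  have haS : a ∈ S := by
    obtain ⟨V, haV, hV⟩ := exists_isLink hU ha hε
    exact ⟨1, _, .single hV haV haV⟩
  refine hUc.subset_of_closure_inter_subset hSo ⟨a, ha, haS⟩ (fun y ⟨hyS, hyU⟩ => ?_) hb
  obtain ⟨V, hyV, hVo, hVS⟩ := hlink y hyU
  exact hVS (mem_closure_iff.1 hyS V hVo hyV) hyV

namespace IsEpsChain

variable {N : ℕ} {C : ℕ → Set X}

/-- Each link `C i` is replaced by an `ε'`-chain inside it from the junction point `p i` to
`p (i + 1)`; padding all of them to a common length `M` keeps the indexing uniform. -/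
theorem exists_refinement (h : IsEpsChain U ε a b N C) (hε' : 0 < ε') :
    ∃ M C', IsEpsChain U ε' a b (N * M) C' ∧ ∀ k < N * M, closure (C' k) ⊆ C (k / M) := by
  obtain ⟨p, hp0, hpN, hp⟩ := h.exists_junctions
  have : ∀ i, ∃ n D, i < N → IsEpsChain (C i) ε' (p i) (p (i + 1)) n D := fun i => by
    by_cases hi : i < N
    · obtain ⟨n, D, hD⟩ := exists_isEpsChain (h.isLink i hi).isOpen
        (h.isLink i hi).isPreconnected (hp i hi).1 (hp i hi).2 hε'
      exact ⟨n, D, fun _ => hD⟩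
    · exact ⟨0, fun _ => ∅, fun hi' => absurd hi' hi⟩
  choose n D hD using this
  set M := (Finset.range N).sup n
  have hpad : ∀ i < N, IsEpsChain (C i) ε' (p i) (p (i + 1)) M
      fun j => D i (min j (n i - 1)) := fun i hi =>
    (hD i hi).pad (Finset.le_sup (f := n) (Finset.mem_range.2 hi))
  have hM : 0 < M := (hpad 0 h.len_pos).len_pos
  refine ⟨M, _, hp0 ▸ hpN ▸ concat h.len_pos fun i hi => (hpad i hi).mono
    (subset_closure.trans (h.isLink i hi).closure_subset), fun k hk => ?_⟩
  exact ((hpad _ ((Nat.div_lt_iff_lt_mul hM).2 hk)).isLink _ (Nat.mod_lt k hM)).closure_subset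

end IsEpsChain

theorem exists_isRefiningSeq (hU : IsOpen U) (hUc : IsPreconnected U) (ha : a ∈ U)
    (hb : b ∈ U) : ∃ N M C, IsRefiningSeq U (fun n => 1 / (n + 1)) a b N M C := by
  let Ch (n : ℕ) := {c : ℕ × (ℕ → Set X) // IsEpsChain U (1 / (n + 1)) a b c.1 c.2}
  have hstep : ∀ n (c : Ch n), ∃ (M : ℕ) (c' : Ch (n + 1)), c'.1.1 = c.1.1 * M ∧
      ∀ k < c'.1.1, closure (c'.1.2 k) ⊆ c.1.2 (k / M) := fun n c => by
    obtain ⟨M, C', hC', hsub⟩ := c.2.exists_refinement (ε' := 1 / ((n + 1 : ℕ) + 1))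
      (by positivity)
    exact ⟨M, ⟨(c.1.1 * M, C'), hC'⟩, rfl, hsub⟩
  choose M next hnext using hstep
  obtain ⟨N₀, C₀, h₀⟩ := exists_isEpsChain hU hUc ha hb (ε := 1 / ((0 : ℕ) + 1)) (by simp)
  let seq (n : ℕ) : Ch n := Nat.rec ⟨(N₀, C₀), h₀⟩ (fun n c => next n c) n
  exact ⟨fun n => (seq n).1.1, fun n => M n (seq n), fun n => (seq n).1.2,
    ⟨fun n => (seq n).2, fun n => (hnext n (seq n)).1, fun n => (hnext n (seq n)).2⟩⟩

end Refinement

section PathConnected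

variable {X : Type*} [MetricSpace X] [CompleteSpace X] {U : Set X} {a b : X}

namespace IsRefiningSeq

variable {N M : ℕ → ℕ} {C : ℕ → ℕ → Set X} {ε : ℕ → ℝ}

theorem exists_mem_closure_chainIndex (h : IsRefiningSeq U ε a b N M C)
    (hε : Tendsto ε atTop (𝓝 0)) (t : ℝ) :
    ∃ y, ∀ n, y ∈ closure (C n (chainIndex (N n) t)) := by
  set K := fun n => closure (C n (chainIndex (N n) t))
  have hlt n : chainIndex (N n) t < N n := chainIndex_lt (h.isEpsChain n).len_pos t
  have hlink n := (h.isEpsChain n).isLink _ (hlt n)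
  have hK : Antitone K := antitone_nat_of_succ_le fun n => show closure _ ⊆ closure _ by
    have hM : 0 < M n := Nat.pos_of_mul_pos_left (h.len_succ n ▸ (h.isEpsChain (n + 1)).len_pos)
    have := h.closure_subset n _ (hlt (n + 1))
    rw [h.len_succ n] at this ⊢
    rw [chainIndex_mul_div (h.isEpsChain n).len_pos hM] at this
    exact this.trans subset_closure
  have hdiam : Tendsto (fun n => diam (K n)) atTop (𝓝 0) :=
    squeeze_zero (fun _ => diam_nonneg) (fun n => (diam_closure _).trans_le (hlink n).diam_le) hε
  obtain ⟨y, hy⟩ := nonempty_iInter_of_nonempty_biInter (fun _ => isClosed_closure)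
    (fun n => (hlink n).isBounded.closure)
    (fun m => ((h.isEpsChain m).nonempty (hlt m)).mono (subset_closure.trans
      (subset_iInter₂ fun n hn => hK hn))) hdiam
  exact ⟨y, mem_iInter.1 hy⟩

theorem joinedIn (h : IsRefiningSeq U ε a b N M C) (hε : Tendsto ε atTop (𝓝 0)) :
    JoinedIn U a b := by
  choose γ hγ using h.exists_mem_closure_chainIndex hε
  have hlink n t := (h.isEpsChain n).isLink _ (chainIndex_lt (h.isEpsChain n).len_pos t)
  have heq {y : X} {t : ℝ} (hy : ∀ n, y ∈ closure (C n (chainIndex (N n) t))) : γ t = y :=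
    dist_le_zero.1 <| ge_of_tendsto' hε fun n => (hlink n t).dist_le (hγ t n) (hy n)
  have hcont : UniformContinuous γ := Metric.uniformContinuous_iff.2 fun η hη => by
    obtain ⟨n, hn⟩ := (hε.eventually (gt_mem_nhds (half_pos hη))).exists
    have hN := (h.isEpsChain n).len_pos
    refine ⟨1 / N n, by positivity, fun {s t} hst => ?_⟩
    obtain ⟨z, hzs, hzt⟩ := (h.isEpsChain n).inter_nonempty (chainIndex_lt hN s)
      (chainIndex_lt hN t) (chainIndex_le_succ hN hst) (chainIndex_le_succ hN (dist_comm s t ▸ hst))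
    calc dist (γ s) (γ t) ≤ dist (γ s) z + dist z (γ t) := dist_triangle _ _ _
      _ ≤ ε n + ε n := add_le_add ((hlink n s).dist_le (hγ s n) (subset_closure hzs))
          ((hlink n t).dist_le (subset_closure hzt) (hγ t n))
      _ < η := by linarith
  refine JoinedIn.ofLine hcont.continuous.continuousOn
    (heq fun n => ?_) (heq fun n => ?_) ?_
  · rw [chainIndex_zero]; exact subset_closure (h.isEpsChain n).left_mem
  · rw [chainIndex_one]; exact subset_closure (h.isEpsChain n).right_mem
  · rintro _ ⟨t, -, rfl⟩
    exact (hlink 0 t).closure_subset (hγ t 0)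

end IsRefiningSeq

end PathConnected

theorem IsPreconnected.joinedIn_of_isOpen {X : Type*} [MetricSpace X] [CompleteSpace X]
    [LocallyConnectedSpace X] {U : Set X} (hUc : IsPreconnected U) (hU : IsOpen U) {a b : X}
    (ha : a ∈ U) (hb : b ∈ U) : JoinedIn U a b := by
  obtain ⟨N, M, C, h⟩ := exists_isRefiningSeq hU hUc ha hb
  exact h.joinedIn tendsto_one_div_add_atTop_nhds_zero_nat

section BallComponent

variable {X : Type*} [MetricSpace X] {Ω : Set X} {x y y₀ : X} {r : ℝ}

def ballComponent (Ω : Set X) (x : X) (r : ℝ) (y : X) : Set X :=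
  connectedComponentIn (Ω ∩ ball x r) y

theorem ballComponent_subset : ballComponent Ω x r y ⊆ Ω ∩ ball x r :=
  connectedComponentIn_subset _ _

theorem closure_ballComponent_subset : closure (ballComponent Ω x r y) ⊆ closedBall x r :=
  (closure_mono (ballComponent_subset.trans inter_subset_right)).trans
    closure_ball_subset_closedBall

theorem inter_frontier_ballComponent_subset [LocallyConnectedSpace X] (hΩ : IsOpen Ω) :
    Ω ∩ frontier (ballComponent Ω x r y) ⊆ sphere x r := by
  rintro z ⟨hzΩ, hz⟩
  have hzb : z ∉ ball x r := fun hzb =>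
    (disjoint_frontier_connectedComponentIn (hΩ.inter isOpen_ball) y).ne_of_mem hz ⟨hzΩ, hzb⟩ rfl
  exact le_antisymm (mem_closedBall.1 (closure_ballComponent_subset (frontier_subset_closure hz)))
    (not_lt.1 hzb)

theorem acceptable_ballComponent (hx : x ∈ frontier Ω) (hy₀ : y₀ ∈ Ω) (hr : r ≤ dist y₀ x)
    (hxE : x ∈ closure (ballComponent Ω x r y)) : Acceptable Ω (ballComponent Ω x r y) := by
  have hy : y ∈ Ω ∩ ball x r :=
    connectedComponentIn_nonempty_iff.1 (closure_nonempty_iff.1 ⟨x, hxE⟩)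
  refine ⟨isBounded_ball.subset (ballComponent_subset.trans inter_subset_right),
    isConnected_connectedComponentIn_iff.2 hy, ballComponent_subset.trans inter_subset_left,
    fun h => ?_, x, hxE, hx⟩
  exact (mem_ball.1 (ballComponent_subset (h ▸ hy₀)).2).not_ge (dist_comm x y₀ ▸ hr)

theorem exists_image_Ico_subset_ballComponent {γ : ℝ → X} (hγc : ContinuousOn γ (Icc 0 1))
    (hγΩ : γ '' Ico 0 1 ⊆ Ω) (hlim : Tendsto γ (𝓝[<] 1) (𝓝 x)) (hr : 0 < r) :
    ∃ t ∈ Ico (0 : ℝ) 1, γ '' Ico t 1 ⊆ ballComponent Ω x r (γ t) := by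
  obtain ⟨l, hl, hsub⟩ := mem_nhdsLT_iff_exists_Ico_subset.1 (hlim (ball_mem_nhds x hr))
  have ht : max l 0 ∈ Ico (0 : ℝ) 1 := ⟨le_max_right _ _, max_lt hl one_pos⟩
  refine ⟨max l 0, ht, (isPreconnected_Ico.image _ (hγc.mono fun s hs =>
    ⟨ht.1.trans hs.1, hs.2.le⟩)).subset_connectedComponentIn ⟨_, ⟨le_rfl, ht.2⟩, rfl⟩ ?_⟩
  rintro _ ⟨s, hs, rfl⟩
  exact ⟨hγΩ ⟨s, ⟨ht.1.trans hs.1, hs.2⟩, rfl⟩, hsub ⟨(le_max_left _ _).trans hs.1, hs.2⟩⟩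

end BallComponent

theorem locallyFinite_Icc_natCast :
    LocallyFinite fun k : ℕ => Icc (k : ℝ) (k + 1) := by
  have hℤ : LocallyFinite fun i : ℤ => Icc (i : ℝ) (i + 1) :=
    locallyFinite_Icc_of_tendsto tendsto_intCast_atTop_atTop
      (tendsto_atBot_add_const_right _ 1 (tendsto_intCast_atBot_iff.2 tendsto_id))
  simpa [Function.comp_def] using hℤ.comp_injective Nat.cast_injective

theorem iUnion_Icc_natCast : ⋃ k : ℕ, Icc (k : ℝ) (k + 1) = Ici 0 := by
  ext u
  simp only [mem_iUnion, mem_Icc, mem_Ici]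
  exact ⟨fun ⟨k, hk, _⟩ => (Nat.cast_nonneg k).trans hk,
    fun hu => ⟨⌊u⌋₊, Nat.floor_le hu, (Nat.lt_floor_add_one u).le⟩⟩

section Curves

variable {X : Type*} [MetricSpace X] {Ω : Set X} {x : X}

theorem exists_continuousOn_Ici_of_joinedIn {p : ℕ → X} {V : ℕ → Set X}
    (hV : ∀ k, JoinedIn (V k) (p k) (p (k + 1))) :
    ∃ δ : ℝ → X, ContinuousOn δ (Ici 0) ∧ ∀ u, 0 ≤ u → δ u ∈ V ⌊u⌋₊ := by
  set σ := fun k => (hV k).somePath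
  set δ := fun u : ℝ => (σ ⌊u⌋₊).extend (u - ⌊u⌋₊)
  have hpiece (k : ℕ) : EqOn δ (fun u => (σ k).extend (u - k)) (Icc k (k + 1)) := by
    rintro u ⟨hku, huk⟩
    rcases huk.lt_or_eq with huk | rfl
    · exact congrArg (fun j => (σ j).extend (u - j))
        ((Nat.floor_eq_iff ((Nat.cast_nonneg k).trans hku)).2 ⟨hku, huk⟩)
    · have : ⌊(k : ℝ) + 1⌋₊ = k + 1 := by exact_mod_cast Nat.floor_natCast (k + 1)
      simp [δ, this]
  refine ⟨δ, iUnion_Icc_natCast ▸ locallyFinite_Icc_natCast.continuousOn_iUnion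
    (fun _ => isClosed_Icc) fun k => ?_, fun u _ => ?_⟩
  · exact ((σ k).continuous_extend.comp (continuous_sub_right _)).continuousOn.congr (hpiece k)
  · obtain ⟨t, ht⟩ := (Path.extend_range _).subset
      (mem_range_self (f := (σ ⌊u⌋₊).extend) (u - ⌊u⌋₊))
    show (σ ⌊u⌋₊).extend (u - ⌊u⌋₊) ∈ V ⌊u⌋₊
    rw [← ht]
    exact (hV _).somePath_mem t

theorem accessible_of_tendsto {δ : ℝ → X} (hδ : ContinuousOn δ (Ici 0))
    (hδΩ : ∀ u, 0 ≤ u → δ u ∈ Ω) (hlim : Tendsto δ atTop (𝓝 x)) : Accessible Ω x := by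
  set γ := fun s : ℝ => if s < 1 then δ (1 - s)⁻¹ else x
  have hpos {s : ℝ} (hs : s < 1) : 0 < (1 - s)⁻¹ := inv_pos.2 (sub_pos.2 hs)
  have hγ : ∀ᶠ s in 𝓝[<] 1, γ s = δ (1 - s)⁻¹ := eventually_nhdsWithin_of_forall fun s hs =>
    if_pos hs
  refine ⟨γ, fun s hs => ?_, by simp [γ], fun _ ⟨s, hs, hγs⟩ => ?_⟩
  · rcases hs.2.lt_or_eq with hs1 | rfl
    · have hφ : ContinuousAt (fun s : ℝ => (1 - s)⁻¹) s :=
        (continuousAt_const.sub continuousAt_id).inv₀ (sub_pos.2 hs1).ne'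
      refine (ContinuousAt.comp (f := fun s : ℝ => (1 - s)⁻¹)
        (hδ.continuousAt (Ici_mem_nhds (hpos hs1))) hφ).congr_of_eventuallyEq ?_
        |>.continuousWithinAt
      filter_upwards [eventually_lt_nhds hs1] with s hs using if_pos hs
    · have hφ : Tendsto (fun s : ℝ => (1 - s)⁻¹) (𝓝[<] 1) atTop := by
        refine tendsto_inv_nhdsGT_zero.comp (tendsto_nhdsWithin_of_tendsto_nhds_of_eventually_within
          _ ?_ ?_)
        · have : Tendsto (fun s : ℝ => 1 - s) (𝓝 1) (𝓝 (1 - 1)) :=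
            tendsto_const_nhds.sub tendsto_id
          exact (sub_self (1 : ℝ) ▸ this).mono_left nhdsWithin_le_nhds
        · filter_upwards [self_mem_nhdsWithin] with s (hs : s < 1) using sub_pos.2 hs
      refine (continuousWithinAt_Iio_iff_Iic.1 ?_).mono fun s hs => hs.2
      simpa [ContinuousWithinAt, γ] using (hlim.comp hφ).congr' (hγ.mono fun _ h => h.symm)
  · rw [← hγs, show γ s = δ (1 - s)⁻¹ from if_pos hs.2]
    exact hδΩ _ (hpos hs.2).le

theorem IsChainIn.exists_closure_subset_ball [ProperSpace X] {E : ℕ → Set X}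
    (hE : IsChainIn Ω E) (him : ⋂ k, closure (E k) = {x}) {ε : ℝ} (hε : 0 < ε) :
    ∃ k, closure (E k) ⊆ ball x ε :=
  exists_subset_nhds_of_isCompact
    (Antitone.directed_ge (f := fun k => closure (E k)) fun _ _ hkl =>
      closure_mono (antitone_nat_of_succ_le hE.2.1 hkl))
    (fun k => (hE.1 k).1.isCompact_closure) (by rw [him]; rintro y rfl; exact ball_mem_nhds y hε)

variable [LocallyConnectedSpace X]

theorem accessible_of_antitone [CompleteSpace X] (hΩ : IsOpen Ω) {E : ℕ → Set X} (hE : Antitone E)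
    (hEc : ∀ k, IsConnected (E k)) (hEΩ : ∀ k, E k ⊆ Ω)
    (hsmall : ∀ ε > 0, ∃ k, E k ⊆ ball x ε) : Accessible Ω x := by
  obtain ⟨φ, hφ, hφE⟩ := extraction_forall_of_eventually
    (P := fun n k => E k ⊆ ball x ((1 / 2) ^ n)) fun n => by
      obtain ⟨k, hk⟩ := hsmall ((1 / 2) ^ n) (by positivity)
      exact eventually_atTop.2 ⟨k, fun j hj => (hE hj).trans hk⟩
  choose p hp using fun k => (hEc (φ k)).nonempty
  set V := fun k => ballComponent Ω x ((1 / 2) ^ k) (p k)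
  have hEV k : E (φ k) ⊆ V k := (hEc _).isPreconnected.subset_connectedComponentIn (hp k)
    (subset_inter (hEΩ _) (hφE k))
  have hjoin k : JoinedIn (V k) (p k) (p (k + 1)) :=
    isPreconnected_connectedComponentIn.joinedIn_of_isOpen
      (hΩ.inter isOpen_ball).connectedComponentIn (hEV k (hp k))
      (hEV k (hE (hφ.monotone k.le_succ) (hp (k + 1))))
  obtain ⟨δ, hδc, hδV⟩ := exists_continuousOn_Ici_of_joinedIn hjoin
  refine accessible_of_tendsto hδc (fun u hu => (ballComponent_subset (hδV u hu)).1) ?_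
  rw [tendsto_iff_dist_tendsto_zero]
  refine squeeze_zero' (.of_forall fun _ => dist_nonneg) ?_
    ((tendsto_pow_atTop_nhds_zero_of_lt_one (r := (1 / 2 : ℝ)) (by norm_num) (by norm_num)).comp
      tendsto_nat_floor_atTop)
  filter_upwards [eventually_ge_atTop 0] with u hu
  exact (mem_ball.1 (ballComponent_subset (hδV u hu)).2).le

theorem IsChainIn.accessible [ProperSpace X] (hΩ : IsOpen Ω) {E : ℕ → Set X}
    (hE : IsChainIn Ω E) (him : ⋂ k, closure (E k) = {x}) : Accessible Ω x :=
  accessible_of_antitone hΩ (antitone_nat_of_succ_le hE.2.1) (fun k => (hE.1 k).2.1)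
    (fun k => (hE.1 k).2.2.1) fun _ hε =>
      (hE.exists_closure_subset_ball him hε).imp fun _ hk => subset_closure.trans hk

end Curves

section PrimeChain

variable {X : Type*} [MetricSpace X] {Ω E : Set X} {x y₀ : X}

theorem setDist_le_dist {A B : Set X} {a b : X} (ha : a ∈ A) (hb : b ∈ B) :
    setDist A B ≤ dist a b :=
  csInf_le ⟨0, fun _ ⟨_, _, _, _, hd⟩ => hd ▸ dist_nonneg⟩ ⟨a, ha, b, hb, rfl⟩

theorem sub_le_setDist_of_subset_sphere {A B : Set X} {r s : ℝ} (hA : A ⊆ sphere x r)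
    (hB : B ⊆ sphere x s) (hA' : A.Nonempty) (hB' : B.Nonempty) : s - r ≤ setDist A B := by
  obtain ⟨a, ha⟩ := hA'
  obtain ⟨b, hb⟩ := hB'
  refine le_csInf ⟨_, a, ha, b, hb, rfl⟩ ?_
  rintro _ ⟨a, ha, b, hb, rfl⟩
  have := dist_triangle b a x
  rw [mem_sphere.1 (hA ha), mem_sphere.1 (hB hb), dist_comm] at this
  linarith

theorem Acceptable.inter_frontier_nonempty (hΩ : IsPreconnected Ω) (hE : Acceptable Ω E) :
    (Ω ∩ frontier E).Nonempty := by
  obtain ⟨y, hyΩ, hyE⟩ := exists_of_ssubset (ssubset_iff_subset_ne.2 ⟨hE.2.2.1, hE.2.2.2.1⟩)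
  obtain ⟨z, hz⟩ := hE.2.1.nonempty
  exact hΩ.inter_frontier_nonempty ⟨z, hE.2.2.1 hz, hz⟩ ⟨y, hyΩ, hyE⟩

theorem IsChainIn.isPrimeChain_of_subset_ball {E : ℕ → Set X} (hE : IsChainIn Ω E)
    (hsmall : ∀ ε > 0, ∃ m, E m ⊆ ball x ε) : IsPrimeChain Ω E := by
  refine ⟨hE, fun F hF hFE => ⟨hFE, fun k => ?_⟩⟩
  set δ := setDist (Ω ∩ frontier (F (k + 1))) (Ω ∩ frontier (F k))
  obtain ⟨m, hm⟩ := hsmall (δ / 2) (half_pos (hF.2.2.1 k))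
  refine ⟨m, fun z hzE => by_contra fun hzF => ?_⟩
  have hF' : Antitone F := antitone_nat_of_succ_le hF.2.1
  obtain ⟨l, hl⟩ := hFE m
  obtain ⟨w, hw⟩ := (hF.1 (max l (k + 1))).2.1.nonempty
  have hwE : w ∈ E m := hl (hF' (le_max_left _ _) hw)
  have hwF : w ∈ F (k + 1) := hF' (le_max_right _ _) hw
  have hEm := (hE.1 m).2.1.isPreconnected
  obtain ⟨p, hpE, hpF⟩ := hEm.inter_frontier_nonempty ⟨w, hwE, hF.2.1 k hwF⟩ ⟨z, hzE, hzF⟩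
  obtain ⟨q, hqE, hqF⟩ :=
    hEm.inter_frontier_nonempty ⟨w, hwE, hwF⟩ ⟨z, hzE, fun h => hzF (hF.2.1 k h)⟩
  have hδ : δ ≤ dist q p := setDist_le_dist ⟨(hE.1 m).2.2.1 hqE, hqF⟩ ⟨(hE.1 m).2.2.1 hpE, hpF⟩
  have := dist_triangle_right q p x
  linarith [mem_ball.1 (hm hpE), mem_ball.1 (hm hqE)]

theorem isChainIn_ballComponent [LocallyConnectedSpace X] (hΩo : IsOpen Ω)
    (hΩc : IsPreconnected Ω) (hx : x ∈ frontier Ω) (hy₀ : y₀ ∈ Ω) {r : ℕ → ℝ}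
    (hr : StrictAnti r) (hr₀ : r 0 ≤ dist y₀ x) (hr0 : Tendsto r atTop (𝓝 0)) {y : ℕ → X}
    (hnest : ∀ k, ballComponent Ω x (r (k + 1)) (y (k + 1)) ⊆ ballComponent Ω x (r k) (y k))
    (hxE : ∀ k, x ∈ closure (ballComponent Ω x (r k) (y k))) :
    IsChainIn Ω (fun k => ballComponent Ω x (r k) (y k)) ∧
      ⋂ k, closure (ballComponent Ω x (r k) (y k)) = {x} := by
  have hacc k : Acceptable Ω (ballComponent Ω x (r k) (y k)) :=
    acceptable_ballComponent hx hy₀ ((hr.antitone (Nat.zero_le k)).trans hr₀) (hxE k)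
  have him : ⋂ k, closure (ballComponent Ω x (r k) (y k)) = {x} :=
    eq_singleton_iff_unique_mem.2 ⟨mem_iInter.2 hxE, fun z hz => dist_le_zero.1 <|
      ge_of_tendsto' hr0 fun k =>
        mem_closedBall.1 (closure_ballComponent_subset (mem_iInter.1 hz k))⟩
  refine ⟨⟨hacc, hnest, fun k => ?_, him ▸ singleton_subset_iff.2 hx⟩, him⟩
  exact (sub_pos.2 (hr k.lt_succ_self)).trans_le <| sub_le_setDist_of_subset_sphere
    (inter_frontier_ballComponent_subset hΩo) (inter_frontier_ballComponent_subset hΩo)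
    ((hacc _).inter_frontier_nonempty hΩc) ((hacc _).inter_frontier_nonempty hΩc)

theorem Accessible.exists_isPrimeChain [LocallyConnectedSpace X] (hacc : Accessible Ω x)
    (hΩo : IsOpen Ω) (hΩc : IsConnected Ω) (hx : x ∈ frontier Ω) :
    ∃ E : ℕ → Set X, IsPrimeChain Ω E ∧ ⋂ k, closure (E k) = {x} := by
  obtain ⟨γ, hγc, hγ1, hγΩ⟩ := hacc
  obtain ⟨y₀, hy₀⟩ := hΩc.nonempty
  have hd : 0 < dist y₀ x := dist_pos.2 fun h => hΩo.inter_frontier_eq.subset ⟨h ▸ hy₀, hx⟩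
  set r := fun k : ℕ => dist y₀ x * (1 / 2) ^ k
  have hr : StrictAnti r := strictAnti_nat_of_succ_lt fun k => mul_lt_mul_of_pos_left
    (pow_lt_pow_right_of_lt_one₀ (by norm_num) (by norm_num) k.lt_succ_self) hd
  have hr0 : Tendsto r atTop (𝓝 0) := by
    simpa only [mul_zero] using (tendsto_pow_atTop_nhds_zero_of_lt_one (r := (1 / 2 : ℝ))
      (by norm_num) (by norm_num)).const_mul (dist y₀ x)
  have hlim : Tendsto γ (𝓝[<] 1) (𝓝 x) := hγ1 ▸ (hγc 1 ⟨zero_le_one, le_rfl⟩).tendsto.mono_left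
    (by rw [← nhdsWithin_Ico_eq_nhdsLT zero_lt_one]; exact nhdsWithin_mono _ Ico_subset_Icc_self)
  choose t ht hγE using fun k =>
    exists_image_Ico_subset_ballComponent hγc hγΩ hlim (mul_pos hd (by positivity) : 0 < r k)
  set E := fun k => ballComponent Ω x (r k) (γ (t k))
  have hxE k : x ∈ closure (E k) := mem_closure_of_tendsto hlim <|
    mem_of_superset (Ico_mem_nhdsLT (ht k).2) fun s hs => hγE k ⟨s, hs, rfl⟩
  have hnest k : E (k + 1) ⊆ E k := by
    set s := max (t k) (t (k + 1))
    have hs : s < 1 := max_lt (ht k).2 (ht (k + 1)).2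
    have hsE : γ s ∈ E k := hγE k ⟨s, ⟨le_max_left _ _, hs⟩, rfl⟩
    have hsE' : γ s ∈ E (k + 1) := hγE (k + 1) ⟨s, ⟨le_max_right _ _, hs⟩, rfl⟩
    rw [show E k = _ from connectedComponentIn_eq hsE]
    exact isPreconnected_connectedComponentIn.subset_connectedComponentIn hsE'
      (ballComponent_subset.trans (inter_subset_inter_right _
        (ball_subset_ball (hr.antitone k.le_succ))))
  obtain ⟨hE, him⟩ := isChainIn_ballComponent hΩo hΩc.isPreconnected hx hy₀ hr (by simp [r]) hr0
    hnest hxE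
  refine ⟨E, hE.isPrimeChain_of_subset_ball (x := x) fun ε hε => ?_, him⟩
  exact (hr0.eventually (gt_mem_nhds hε)).exists.imp fun m hm =>
    ballComponent_subset.trans (inter_subset_right.trans (ball_subset_ball hm.le))

end PrimeChain

/-- For `x ∈ ∂Ω` the following are equivalent: `x` is accessible; there is a
chain with impression `{x}`; there is a prime chain with impression `{x}`. -/
theorem statement6 {X : Type*} [MetricSpace X] [ProperSpace X] [LocallyConnectedSpace X]
    (Ω : Set X) (hΩ : BoundedDomain Ω)
    (x : X) (hx : x ∈ frontier Ω) :
    (Accessible Ω x ↔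
      ∃ E : ℕ → Set X, IsChainIn Ω E ∧ (⋂ k, closure (E k)) = {x}) ∧
    (Accessible Ω x ↔
      ∃ E : ℕ → Set X, IsPrimeChain Ω E ∧ (⋂ k, closure (E k)) = {x}) := by
  have hprime (h : Accessible Ω x) := h.exists_isPrimeChain hΩ.1 hΩ.2.1 hx
  refine ⟨⟨fun h => ?_, fun ⟨E, hE, him⟩ => hE.accessible hΩ.1 him⟩,
    ⟨hprime, fun ⟨E, hE, him⟩ => hE.1.accessible hΩ.1 him⟩⟩
  obtain ⟨E, hE, him⟩ := hprime h
  exact ⟨E, hE.1, him⟩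
end

section
/- Assume Ω is finitely connected at x₀ ∈ ∂Ω. Let A_k ⊊ Ω be sets with A_{k+1} ⊆ A_k, x₀ ∈ cl(A_k), and dist(x₀, Ω ∩ ∂A_k) > 0 for each k, and let {r_k} be a sequence decreasing to zero with 0 < r_k < dist(x₀, Ω ∩ ∂A_k). Then for each k there is a connected component G of B(x₀, r_k) ∩ Ω such that x₀ ∈ cl(G), G ⊆ A_k, and G ∩ A_l ≠ ∅ for every l. -/
open Metric Set Filter Topology

/-- If `Ω` is finitely connected at `x₀ ∈ ∂Ω` and `A k` are nested sets with
`x₀ ∈ closure (A k)` and `dist(x₀, Ω ∩ ∂A k) > 0`, then for radii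
`r k < dist(x₀, Ω ∩ ∂A k)` decreasing to zero there is, for each `k`, a
component `G` of `B(x₀, r k) ∩ Ω` with `x₀ ∈ closure G`, `G ⊆ A k`, and
meeting every `A l`. -/
theorem statement10 {X : Type*} [MetricSpace X] [ProperSpace X] [LocallyConnectedSpace X]
    (Ω : Set X) (hΩ : BoundedDomain Ω)
    (x₀ : X) (hx₀ : x₀ ∈ frontier Ω) (hfc : FinitelyConnectedAt Ω x₀)
    (A : ℕ → Set X) (hAsub : ∀ k, A k ⊆ Ω) (hAne : ∀ k, A k ≠ Ω)
    (hAnest : ∀ k, A (k + 1) ⊆ A k) (hAcl : ∀ k, x₀ ∈ closure (A k))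
    (hAdist : ∀ k, 0 < Metric.infDist x₀ (Ω ∩ frontier (A k)))
    (r : ℕ → ℝ)
    (hr : ∀ k, 0 < r k ∧ r k < Metric.infDist x₀ (Ω ∩ frontier (A k)))
    (hrdec : Antitone r) (hrlim : Tendsto r atTop (𝓝 0)) :
    ∀ k, ∃ G : Set X,
      (∃ y ∈ Metric.ball x₀ (r k) ∩ Ω,
        G = connectedComponentIn (Metric.ball x₀ (r k) ∩ Ω) y) ∧
      x₀ ∈ closure G ∧ G ⊆ A k ∧ ∀ l, (G ∩ A l).Nonempty := by
  intro k
  have hrk := (hr k).1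
  obtain ⟨G₀, hG₀open, hx₀G₀, hG₀sub, hfin⟩ := hfc (r k) hrk
  obtain ⟨δ, hδpos, hδ⟩ := Metric.isOpen_iff.mp hG₀open x₀ hx₀G₀
  have hA : Antitone A := antitone_nat_of_succ_le hAnest
  have hex : ∀ n : ℕ, ∃ z, z ∈ A (max n k) ∧ dist x₀ z < min δ (1 / (n + 1)) := by
    intro n
    have h1 : (0 : ℝ) < min δ (1 / (n + 1)) := lt_min hδpos (by positivity)
    obtain ⟨z, hz, hd⟩ := Metric.mem_closure_iff.mp (hAcl (max n k)) _ h1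
    exact ⟨z, hz, hd⟩
  choose y hyA hyd using hex
  have hyG : ∀ n, y n ∈ G₀ ∩ Ω := fun n =>
    ⟨hδ (by rw [Metric.mem_ball, dist_comm]; exact lt_of_lt_of_le (hyd n) (min_le_left _ _)),
     hAsub _ (hyA n)⟩
  set S := {C : Set X | ∃ y ∈ G₀ ∩ Ω, C = connectedComponentIn (G₀ ∩ Ω) y} with hS
  haveI : Finite ↥S := hfin.to_subtype
  set f : ℕ → ↥S := fun n => ⟨connectedComponentIn (G₀ ∩ Ω) (y n), ⟨y n, hyG n, rfl⟩⟩ with hf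
  obtain ⟨b, hb⟩ := Finite.exists_infinite_fiber f
  have hinf : {n : ℕ | f n = b}.Infinite := by
    rw [← Set.infinite_coe_iff]; exact hb
  obtain ⟨n₀, hn₀⟩ := hinf.nonempty
  set B := Metric.ball x₀ (r k) ∩ Ω with hB
  have hG₀B : G₀ ∩ Ω ⊆ B := fun z hz => ⟨hG₀sub hz.1, hz.2⟩
  set G := connectedComponentIn B (y n₀) with hGdef
  have hyn₀B : y n₀ ∈ B := hG₀B (hyG n₀)
  have hmem : ∀ n, f n = b → y n ∈ G := by
    intro n hn
    have h1 : connectedComponentIn (G₀ ∩ Ω) (y n) = connectedComponentIn (G₀ ∩ Ω) (y n₀) := by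
      have e1 : (f n : Set X) = (b : Set X) := congrArg Subtype.val hn
      have e2 : (f n₀ : Set X) = (b : Set X) := congrArg Subtype.val hn₀
      simpa [hf] using e1.trans e2.symm
    have h2 : y n ∈ connectedComponentIn (G₀ ∩ Ω) (y n₀) :=
      h1 ▸ mem_connectedComponentIn (hyG n)
    exact connectedComponentIn_mono (y n₀) hG₀B h2
  have hGB : G ⊆ B := connectedComponentIn_subset _ _
  -- arbitrarily large fiber elements are close to x₀ and inside G
  have hxcl : x₀ ∈ closure G := by
    rw [Metric.mem_closure_iff]
    intro ε hε
    obtain ⟨N, hN⟩ := exists_nat_one_div_lt hε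
    obtain ⟨n, hn, hnN⟩ := hinf.exists_gt N
    refine ⟨y n, hmem n hn, ?_⟩
    have h1 : (1 : ℝ) / (n + 1) ≤ 1 / (N + 1) := by
      apply one_div_le_one_div_of_le (by positivity)
      have : (N : ℝ) ≤ n := by exact_mod_cast hnN.le
      linarith
    calc dist x₀ (y n) < min δ (1 / (n + 1)) := hyd n
      _ ≤ 1 / (n + 1) := min_le_right _ _
      _ ≤ 1 / (N + 1) := h1
      _ < ε := hN
  -- every point of G avoids frontier (A k)
  have hGfront : ∀ z ∈ G, z ∉ frontier (A k) := by
    intro z hzG hzf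
    have hzB : z ∈ B := hGB hzG
    have h1 : Metric.infDist x₀ (Ω ∩ frontier (A k)) ≤ dist x₀ z :=
      Metric.infDist_le_dist_of_mem ⟨hzB.2, hzf⟩
    have h2 : dist x₀ z < r k := by
      rw [dist_comm]; exact Metric.mem_ball.mp hzB.1
    exact absurd (lt_of_le_of_lt (lt_of_lt_of_le (hr k).2 h1).le h2) (lt_irrefl _)
  have hGne : (G ∩ A k).Nonempty :=
    ⟨y n₀, hmem n₀ hn₀, hA (le_max_right n₀ k) (hyA n₀)⟩
  have hGsubA : G ⊆ A k := by
    have hsub : G ⊆ interior (A k) ∪ (closure (A k))ᶜ := by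
      intro z hz
      by_cases h1 : z ∈ closure (A k)
      · by_cases h2 : z ∈ interior (A k)
        · exact Or.inl h2
        · exact absurd ⟨h1, h2⟩ (hGfront z hz)
      · exact Or.inr h1
    have hdisj : Disjoint (interior (A k)) (closure (A k))ᶜ :=
      disjoint_compl_right.mono_left (interior_subset.trans subset_closure)
    have hne : (G ∩ interior (A k)).Nonempty := by
      obtain ⟨w, hwG, hwA⟩ := hGne
      rcases hsub hwG with h | h
      · exact ⟨w, hwG, h⟩
      · exact absurd (subset_closure hwA) h
    have := isPreconnected_connectedComponentIn.subset_left_of_subset_union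
      isOpen_interior isClosed_closure.isOpen_compl hdisj hsub hne
    exact this.trans interior_subset
  refine ⟨G, ⟨y n₀, hyn₀B, rfl⟩, hxcl, hGsubA, ?_⟩
  intro l
  obtain ⟨n, hn, hnl⟩ := hinf.exists_gt l
  exact ⟨y n, hmem n hn, hA (le_trans hnl.le (le_max_left n k)) (hyA n)⟩
end
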